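/- For a CW object V• in a cocomplete pointed category with CW basis (V̄_n), the n-th latching object decomposes as L_n V• ≅ ⨿_{0 ≤ k < n} ⨿_{0 ≤ i_1 < … < i_{n−k−1} ≤ n−1} V̄_k, where the summand indexed by (i_1,…,i_{n−k−1}) includes into V_n via the iterated degeneracy s_{i_{n−k−1}} … s_{i_2} s_{i_1} restricted to V̄_k. -/

import Mathlib

open CategoryTheory CategoryTheory.Limits Simplicial Opposite

namespace Stmt4

variable {M : Type*} [Category M] [HasZeroObject M] [HasZeroMorphisms M] [HasColimits M]

/-- The indexing category for the `n`-th latching object: surjections `[n] ↠ [k]` with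
`k < n` (as a full subcategory of the under category), made opposite since simplicial
objects are contravariant. -/
def LatchIndex (n : ℕ) : Type _ :=
  (ObjectProperty.FullSubcategory fun f : Under (⦋n⦌ : SimplexCategory) =>
    Epi f.hom ∧ f.right.len < n)ᵒᵖ

instance (n : ℕ) : Category (LatchIndex n) := by
  dsimp [LatchIndex]; infer_instance

/-- The diagram whose colimit is the `n`-th latching object. -/
def latchDiagram (V : CategoryTheory.SimplicialObject M) (n : ℕ) : LatchIndex n ⥤ M :=
  ((ObjectProperty.ι _ ⋙ Under.forget (⦋n⦌ : SimplexCategory)).op ⋙ V :)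

/-- The `n`-th latching object `L_n V = colim_{[n]↠[k], k<n} V_k`. -/
noncomputable def latching (V : CategoryTheory.SimplicialObject M) (n : ℕ) : M :=
  colimit (latchDiagram V n)

/-- The canonical map `L_n V → V_n`, with components the degeneracies `V.map θ.op`. -/
noncomputable def latchCanon (V : CategoryTheory.SimplicialObject M) (n : ℕ) :
    latching V n ⟶ V _⦋n⦌ :=
  colimit.desc (latchDiagram V n)
    { pt := V _⦋n⦌
      ι :=
        { app := fun A => V.map (A.unop.obj.hom).op
          naturality := by
            intro A B f
            dsimp [latchDiagram]
            rw [Category.comp_id]; erw [← V.map_comp]; exact congrArg V.map (congrArg Quiver.Hom.op (Under.w f.unop.hom)) } }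

/-- Indexing type for the coproduct decomposition of the latching object: pairs of a
`k < n` and a surjection `θ : [n] ↠ [k]` (equivalently, by the unique expression of a
surjection in `Δ` as a composite of codegeneracies with decreasing indices, tuples
`0 ≤ i_1 < … < i_{n-k-1} ≤ n-1`). -/
def DecompIndex (n : ℕ) : Type _ :=
  Σ k : Fin n, { θ : (⦋n⦌ : SimplexCategory) ⟶ ⦋(k : ℕ)⦌ // Epi θ }

/-- The object of `LatchIndex n` associated to an element of `DecompIndex n`. -/
def toLatchIndex {n : ℕ} (p : DecompIndex n) : LatchIndex n :=
  op ⟨Under.mk p.2.1, ⟨by simpa using p.2.2, by simpa using p.1.2⟩⟩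

/-- The canonical comparison map `⨿_{k<n} ⨿_{[n]↠[k]} V̄_k → L_n V`, whose component at
`(k, θ)` is the basis inclusion `ι_k : V̄_k → V_k` followed by the colimit leg; composed
with `L_n V → V_n` it is the iterated degeneracy `V.map θ.op` restricted to the basis. -/
noncomputable def decompMap (V : CategoryTheory.SimplicialObject M)
    (Vbar : ℕ → M) (ι : ∀ m : ℕ, Vbar m ⟶ V _⦋m⦌) (n : ℕ) :
    (∐ fun p : DecompIndex n => Vbar (p.1 : ℕ)) ⟶ latching V n :=
  Sigma.desc fun p => ι (p.1 : ℕ) ≫ colimit.ι (latchDiagram V n) (toLatchIndex p)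

end Stmt4

/-!
Say that `V` is split in degree `m` when `V_m` is the coproduct `⨿_{[m] ↠ [j]} V̄_j` of the basis
objects over all surjections out of `[m]`, with legs `ι_j ≫ V.map θ.op`, i.e. when
`Splitting.cofan' Vbar V ι (op ⦋m⦌)` is a colimit. If `V` is split below `n`, the latching diagram is a
diagram of coproducts: at `θ : [n] ↠ [k]` its summands are the surjections `σ : [k] ↠ [j]`, and
the transition maps send summands to summands. A cocone is therefore the same as a choice of
map out of `V̄_j` for each composite `θ ≫ σ : [n] ↠ [j]`, so `L_n V` is the coproduct over the
non-identity surjections out of `[n]`. Adding the summand `V̄_n` through `V_n = V̄_n ⨿ L_n V`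
shows that `V` is split in degree `n` as well, and strong induction on `n` concludes.
-/

namespace Stmt4

open SimplicialObject.Splitting

section

variable {M : Type*} [Category M]

def DecompIndex.toIndexSet {m : ℕ} (p : DecompIndex m) : IndexSet (op ⦋m⦌) := ⟨op ⦋p.1⦌, p.2⟩

lemma eq_id_or_eq_toIndexSet {m : ℕ} (A : IndexSet (op ⦋m⦌)) :
    A = IndexSet.id _ ∨ ∃ p : DecompIndex m, A = p.toIndexSet := by
  refine or_iff_not_imp_left.2 fun hA => ?_
  have hlt : A.1.unop.len < m :=
    (SimplexCategory.len_le_of_epi A.e).lt_of_ne fun h => hA (A.eqId_iff_len_eq.2 h)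
  exact ⟨⟨⟨_, hlt⟩, A.2⟩, rfl⟩

lemma DecompIndex.cofan_inj_congr {n : ℕ} {F : ℕ → M} (s : Cofan fun p : DecompIndex n => F p.1)
    {k : Fin n} {θ θ' : ⦋n⦌ ⟶ ⦋(k : ℕ)⦌} {hθ : Epi θ} {hθ' : Epi θ'} (h : θ = θ') :
    s.inj ⟨k, θ, hθ⟩ = s.inj ⟨k, θ', hθ'⟩ := by
  subst h; rfl

namespace LatchIndex

variable {n : ℕ} (A : LatchIndex n)

instance : Epi A.unop.obj.hom := A.unop.property.1

instance epi_hom_right {A B : LatchIndex n} (f : A ⟶ B) : Epi f.unop.hom.right :=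
  epi_of_epi_fac (Under.w f.unop.hom)

lemma len_lt : A.unop.obj.right.len < n := A.unop.property.2

def compIndexSet (B : IndexSet (op A.unop.obj.right)) : DecompIndex n :=
  ⟨⟨B.1.unop.len, (SimplexCategory.len_le_of_epi B.e).trans_lt A.len_lt⟩,
    ⟨A.unop.obj.hom ≫ B.e, epi_comp _ _⟩⟩

end LatchIndex

variable (V : SimplicialObject M) (Vbar : ℕ → M) (ι : ∀ m : ℕ, Vbar m ⟶ V _⦋m⦌)

lemma cofan'_inj_id (m : ℕ) : (cofan' Vbar V ι (op ⦋m⦌)).inj (IndexSet.id _) = ι m := by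
  change ι m ≫ V.map (𝟙 _).op = ι m
  rw [op_id, V.map_id, Category.comp_id]

lemma cofan'_inj_epi_naturality {Δ₁ Δ₂ : SimplexCategoryᵒᵖ} (A : IndexSet Δ₁) (p : Δ₁ ⟶ Δ₂)
    [Epi p.unop] : (cofan' Vbar V ι Δ₁).inj A ≫ V.map p = (cofan' Vbar V ι Δ₂).inj (A.epiComp p) :=
  (Category.assoc _ _ _).trans (ι _ ≫= (V.map_comp _ _).symm)

section LatchingCocone

variable {V Vbar ι} {n : ℕ}
  (h : ∀ Δ : SimplexCategoryᵒᵖ, Δ.unop.len < n → IsColimit (cofan' Vbar V ι Δ))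
  (s : Cofan fun p : DecompIndex n => Vbar p.1)

noncomputable def latchingCoconeApp (A : LatchIndex n) : V.obj (op A.unop.obj.right) ⟶ s.pt :=
  Cofan.IsColimit.desc (h (op A.unop.obj.right) A.len_lt) fun B => s.inj (A.compIndexSet B)

lemma cofan'_inj_latchingCoconeApp (A : LatchIndex n) (C : IndexSet (op A.unop.obj.right)) :
    (cofan' Vbar V ι _).inj C ≫ latchingCoconeApp h s A = s.inj (A.compIndexSet C) :=
  Cofan.IsColimit.fac _ _ C

noncomputable def latchingCoconeOfCofan : Cocone (latchDiagram V n) where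
  pt := s.pt
  ι.app := latchingCoconeApp h s
  ι.naturality A B f := by
    refine Cofan.IsColimit.hom_ext (h (op A.unop.obj.right) A.len_lt) _ _ fun C => ?_
    change (cofan' Vbar V ι _).inj C ≫ V.map f.unop.hom.right.op ≫ latchingCoconeApp h s B =
      (cofan' Vbar V ι _).inj C ≫ latchingCoconeApp h s A ≫ 𝟙 _
    rw [Category.comp_id, ← Category.assoc, cofan'_inj_epi_naturality, cofan'_inj_latchingCoconeApp]
    exact (cofan'_inj_latchingCoconeApp h s B _).trans (DecompIndex.cofan_inj_congr s
      ((Category.assoc _ _ _).symm.trans (Under.w f.unop.hom =≫ C.e)))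

end LatchingCocone

variable [HasColimits M]

noncomputable abbrev latchingCofan (n : ℕ) : Cofan fun p : DecompIndex n => Vbar p.1 :=
  Cofan.mk (latching V n) fun p => ι p.1 ≫ colimit.ι (latchDiagram V n) (toLatchIndex p)

lemma colimit_ι_latchCanon {n : ℕ} (A : LatchIndex n) :
    colimit.ι (latchDiagram V n) A ≫ latchCanon V n = V.map A.unop.obj.hom.op :=
  colimit.ι_desc _ _

lemma cofan'_inj_toIndexSet {m : ℕ} (p : DecompIndex m) :
    (cofan' Vbar V ι (op ⦋m⦌)).inj p.toIndexSet =
      (latchingCofan V Vbar ι m).inj p ≫ latchCanon V m :=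
  ((Category.assoc _ _ _).trans (ι p.1 ≫= colimit_ι_latchCanon V (toLatchIndex p))).symm

lemma cofan'_hom_ext {m : ℕ} (hb : IsColimit (BinaryCofan.mk (ι m) (latchCanon V m)))
    (hl : IsColimit (latchingCofan V Vbar ι m)) {Z : M} {f g : V _⦋m⦌ ⟶ Z}
    (h : ∀ A, (cofan' Vbar V ι (op ⦋m⦌)).inj A ≫ f = (cofan' Vbar V ι (op ⦋m⦌)).inj A ≫ g) :
    f = g := by
  refine BinaryCofan.IsColimit.hom_ext hb ?_ (Cofan.IsColimit.hom_ext hl _ _ fun p => ?_)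
  · have hid := h (IndexSet.id _)
    rw [cofan'_inj_id] at hid
    exact hid
  · have hp := h p.toIndexSet
    rw [cofan'_inj_toIndexSet] at hp
    exact (Category.assoc _ _ _).symm.trans (hp.trans (Category.assoc _ _ _))

noncomputable def isColimitCofan'OfIsColimitLatchingCofan {m : ℕ}
    (hb : IsColimit (BinaryCofan.mk (ι m) (latchCanon V m)))
    (hl : IsColimit (latchingCofan V Vbar ι m)) : IsColimit (cofan' Vbar V ι (op ⦋m⦌)) :=
  let desc (s : Cofan (summand Vbar (op ⦋m⦌))) : V _⦋m⦌ ⟶ s.pt :=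
    BinaryCofan.IsColimit.desc hb (s.inj (IndexSet.id _))
      (Cofan.IsColimit.desc hl fun p => s.inj p.toIndexSet)
  have fac (s : Cofan (summand Vbar (op ⦋m⦌))) (A : IndexSet (op ⦋m⦌)) :
      (cofan' Vbar V ι (op ⦋m⦌)).inj A ≫ desc s = s.inj A := by
    rcases eq_id_or_eq_toIndexSet A with rfl | ⟨p, rfl⟩
    · rw [cofan'_inj_id]
      exact BinaryCofan.IsColimit.inl_desc hb _ _
    · rw [cofan'_inj_toIndexSet]
      exact ((Category.assoc _ _ _).trans (_ ≫= BinaryCofan.IsColimit.inr_desc hb _ _)).trans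
        (Cofan.IsColimit.fac hl _ p)
  Cofan.IsColimit.mk _ desc fac fun s g hg =>
    cofan'_hom_ext V Vbar ι hb hl fun A => (hg A).trans (fac s A).symm

lemma cofan'_inj_comp_colimit_ι {n : ℕ} (A : LatchIndex n) (B : IndexSet (op A.unop.obj.right)) :
    (cofan' Vbar V ι _).inj B ≫ colimit.ι (latchDiagram V n) A =
      (latchingCofan V Vbar ι n).inj (A.compIndexSet B) := by
  let g : toLatchIndex (A.compIndexSet B) ⟶ A :=
    (ObjectProperty.homMk (Under.homMk B.e rfl) : A.unop ⟶ _).op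
  exact (Category.assoc _ _ _).trans (ι _ ≫= colimit.w (latchDiagram V n) g)

noncomputable def isColimitLatchingCofan {n : ℕ}
    (h : ∀ Δ : SimplexCategoryᵒᵖ, Δ.unop.len < n → IsColimit (cofan' Vbar V ι Δ)) :
    IsColimit (latchingCofan V Vbar ι n) :=
  Cofan.IsColimit.mk _ (fun s => colimit.desc _ (latchingCoconeOfCofan h s))
    (fun s p => by
      obtain ⟨k, θ, hθ⟩ := p
      refine (Category.assoc _ _ _).trans ((ι k ≫= colimit.ι_desc (latchingCoconeOfCofan h s)
        (toLatchIndex ⟨k, θ, hθ⟩)).trans ?_)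
      rw [← cofan'_inj_id V Vbar ι k]
      exact (cofan'_inj_latchingCoconeApp h s (toLatchIndex ⟨k, θ, hθ⟩) (IndexSet.id _)).trans
        (DecompIndex.cofan_inj_congr s (Category.comp_id θ)))
    (fun s g hg => colimit.hom_ext (F := latchDiagram V n) fun A => by
      refine Eq.trans ?_ (colimit.ι_desc (latchingCoconeOfCofan h s) A).symm
      refine Cofan.IsColimit.hom_ext (h (op A.unop.obj.right) A.len_lt) _ _ fun C => ?_
      exact (Category.assoc _ _ _).symm.trans ((cofan'_inj_comp_colimit_ι V Vbar ι A C =≫ g).trans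
        ((hg _).trans (cofan'_inj_latchingCoconeApp h s A C).symm)))

lemma nonempty_isColimit_cofan'
    (hcw : ∀ m, Nonempty (IsColimit (BinaryCofan.mk (ι m) (latchCanon V m)))) (m : ℕ) :
    Nonempty (IsColimit (cofan' Vbar V ι (op ⦋m⦌))) := by
  induction m using Nat.strong_induction_on with
  | _ m ih =>
    exact ⟨isColimitCofan'OfIsColimitLatchingCofan V Vbar ι (hcw m).some
      (isColimitLatchingCofan V Vbar ι fun Δ hΔ => (ih _ hΔ).some)⟩

end

variable {M : Type*} [Category M] [HasZeroObject M] [HasZeroMorphisms M] [HasColimits M]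

theorem latching_decomposition_general (V : CategoryTheory.SimplicialObject M)
    (Vbar : ℕ → M) (ι : ∀ m : ℕ, Vbar m ⟶ V _⦋m⦌)
    (hcw : ∀ m : ℕ, Nonempty (IsColimit (BinaryCofan.mk (ι m) (latchCanon V m))))
    (n : ℕ) :
    IsIso (decompMap V Vbar ι n) :=
  (Cofan.nonempty_isColimit_iff_isIso_sigmaDesc (latchingCofan V Vbar ι n)).1
    ⟨isColimitLatchingCofan V Vbar ι fun _ _ => (nonempty_isColimit_cofan' V Vbar ι hcw _).some⟩

/-- Let `V` be a CW object in a cocomplete pointed category with CW basis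
`(V̄_n)`: each `V_n` is the coproduct of `V̄_n` and the latching object `L_n V` (via the basis
inclusion `ι_n` and the canonical map `L_n V → V_n`), and the face maps `d_i` vanish on
`V̄_n` for `1 ≤ i ≤ n`.  Then the `n`-th latching object decomposes as the coproduct
`L_n V ≅ ⨿_{0≤k<n} ⨿_{0≤i_1<…<i_{n-k-1}≤n-1} V̄_k` (indexed by the surjections `[n] ↠ [k]`),
where the summand indexed by `(k, θ)` includes into `V_n` via the corresponding iterated
degeneracy restricted to `V̄_k`. -/
theorem latching_decomposition (V : CategoryTheory.SimplicialObject M)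
    (Vbar : ℕ → M) (ι : ∀ m : ℕ, Vbar m ⟶ V _⦋m⦌)
    (hcw : ∀ m : ℕ, Nonempty (IsColimit (BinaryCofan.mk (ι m) (latchCanon V m))))
    (hface : ∀ (m : ℕ) (i : Fin (m + 2)), i ≠ 0 → ι (m + 1) ≫ V.δ i = 0)
    (n : ℕ) :
    IsIso (decompMap V Vbar ι n) :=
  latching_decomposition_general V Vbar ι hcw n

end Stmt4
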